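/- arXiv:2301.00108 — 2 statements merged into one kernel-verified Lean document; each statement's English description precedes it below -/
import Mathlib

section
/- Let e = {i,j} be an edge of a finite simple graph G with C(i,G) > C(j,G) and CS(j,G) ≥ 2. Then removing e changes no core value: C(u, G−e) = C(u,G) for every vertex u. -/
/-- A set `S` of vertices is `k`-supported in `G` if every vertex of `S`
has at least `k` neighbors inside `S`. -/
def kSupported {V : Type*} (G : SimpleGraph V) (k : ℕ) (S : Set V) : Prop :=
  ∀ i ∈ S, k ≤ {j | j ∈ S ∧ G.Adj i j}.ncard

/-- The `k`-core of `G`: the union of all `k`-supported sets. -/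
def kCore {V : Type*} (G : SimpleGraph V) (k : ℕ) : Set V :=
  ⋃₀ {S | kSupported G k S}

/-- The core value `C(i,G)` of a vertex `i`: the largest `k` with `i ∈ V_k(G)`. -/
noncomputable def coreValue {V : Type*} (G : SimpleGraph V) (i : V) : ℕ :=
  sSup {k | i ∈ kCore G k}

/-- The supportive neighbors of `i` at level `k`:
neighbors `j` of `i` with core value at least `k`. -/
def SN {V : Type*} (G : SimpleGraph V) (i : V) (k : ℕ) : Set V :=
  {j | G.Adj i j ∧ k ≤ coreValue G j}

/-- `SN(i,G)`: abbreviation for `SN(i, C(i,G), G)`. -/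
noncomputable def SNc {V : Type*} (G : SimpleGraph V) (i : V) : Set V :=
  SN G i (coreValue G i)

/-- The core strength `CS(i,G) = |SN(i,G)| - C(i,G) + 1`. -/
noncomputable def CS {V : Type*} (G : SimpleGraph V) (i : V) : ℕ :=
  (SNc G i).ncard - coreValue G i + 1

section Aux

variable {V : Type*}

lemma kSupported_mono_k (G : SimpleGraph V) {k k' : ℕ} {S : Set V}
    (h : kSupported G k S) (hle : k' ≤ k) : kSupported G k' S :=
  fun v hv => hle.trans (h v hv)

lemma mem_kCore_of_le (G : SimpleGraph V) {k k' : ℕ} {v : V}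
    (h : v ∈ kCore G k) (hle : k' ≤ k) : v ∈ kCore G k' := by
  obtain ⟨S, hS, hv⟩ := Set.mem_sUnion.1 h
  exact Set.mem_sUnion.2 ⟨S, kSupported_mono_k G hS hle, hv⟩

lemma kSupported_kCore [Fintype V] (G : SimpleGraph V) (k : ℕ) :
    kSupported G k (kCore G k) := by
  intro v hv
  obtain ⟨S, hS, hvS⟩ := Set.mem_sUnion.1 hv
  refine (hS v hvS).trans (Set.ncard_le_ncard ?_ (Set.toFinite _))
  intro w hw
  exact ⟨Set.mem_sUnion.2 ⟨S, hS, hw.1⟩, hw.2⟩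

lemma coreSet_bddAbove [Fintype V] (G : SimpleGraph V) (v : V) :
    BddAbove {k | v ∈ kCore G k} := by
  refine ⟨Fintype.card V, fun k hk => ?_⟩
  obtain ⟨S, hS, hvS⟩ := Set.mem_sUnion.1 hk
  calc k ≤ _ := hS v hvS
    _ ≤ (Set.univ : Set V).ncard :=
        Set.ncard_le_ncard (Set.subset_univ _) (Set.toFinite _)
    _ = Fintype.card V := by rw [Set.ncard_univ, Nat.card_eq_fintype_card]

lemma zero_mem_kCore (G : SimpleGraph V) (v : V) : v ∈ kCore G 0 :=
  Set.mem_sUnion.2 ⟨Set.univ, fun _ _ => Nat.zero_le _, Set.mem_univ v⟩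

lemma mem_kCore_iff [Fintype V] (G : SimpleGraph V) (k : ℕ) (v : V) :
    v ∈ kCore G k ↔ k ≤ coreValue G v := by
  constructor
  · intro h; exact le_csSup (coreSet_bddAbove G v) h
  · intro h
    have hmem : coreValue G v ∈ {k | v ∈ kCore G k} :=
      Nat.sSup_mem ⟨0, zero_mem_kCore G v⟩ (coreSet_bddAbove G v)
    exact mem_kCore_of_le G hmem h

lemma coreValue_mono [Fintype V] {G₁ G₂ : SimpleGraph V} (h : G₁ ≤ G₂) (v : V) :
    coreValue G₁ v ≤ coreValue G₂ v := by
  rw [← mem_kCore_iff]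
  have hv : v ∈ kCore G₁ (coreValue G₁ v) := (mem_kCore_iff G₁ _ v).2 le_rfl
  obtain ⟨S, hS, hvS⟩ := Set.mem_sUnion.1 hv
  refine Set.mem_sUnion.2 ⟨S, fun w hw => (hS w hw).trans
    (Set.ncard_le_ncard (fun x hx => ⟨hx.1, h hx.2⟩) (Set.toFinite _)), hvS⟩

end Aux

theorem stmt_11 {V : Type*} [Fintype V] (G : SimpleGraph V) (i j : V)
    (hij : G.Adj i j) (hC : coreValue G j < coreValue G i)
    (hj : 2 ≤ CS G j) (u : V) :
    coreValue (G.deleteEdges {s(i, j)}) u = coreValue G u := by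
  set G' := G.deleteEdges {s(i, j)} with hG'def
  have hne : i ≠ j := hij.ne
  have hG'adj : ∀ v w : V, G'.Adj v w ↔ G.Adj v w ∧ s(v, w) ≠ s(i, j) := by
    intro v w
    rw [hG'def, SimpleGraph.deleteEdges_adj]
    simp
  -- core strength gives many supportive neighbors of j
  have hcard : coreValue G j + 1 ≤ (SNc G j).ncard := by
    unfold CS at hj; omega
  -- the k-core of G is k-supported in G'
  have key : ∀ k, kSupported G' k (kCore G k) := by
    intro k v hv
    have hvC : k ≤ coreValue G v := (mem_kCore_iff G k v).1 hv
    by_cases hvj : v = j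
    · rw [hvj] at hvC ⊢
      -- use SNc minus i
      have hsub : SNc G j \ {i} ⊆ {w | w ∈ kCore G k ∧ G'.Adj j w} := by
        rintro w ⟨⟨hadj, hcw⟩, hwi⟩
        simp only [Set.mem_singleton_iff] at hwi
        refine ⟨(mem_kCore_iff G k w).2 (le_trans hvC hcw), (hG'adj j w).2 ⟨hadj, ?_⟩⟩
        intro hs
        rcases Sym2.eq_iff.1 hs with ⟨h1, _⟩ | ⟨_, h2⟩
        · exact hne h1.symm
        · exact hwi h2
      have h1 : (SNc G j).ncard ≤ (SNc G j \ {i}).ncard + 1 := by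
        calc (SNc G j).ncard ≤ (insert i (SNc G j \ {i})).ncard := by
              refine Set.ncard_le_ncard ?_ (Set.toFinite _)
              intro x hx
              by_cases hxi : x = i
              · simp [hxi]
              · exact Set.mem_insert_of_mem _ ⟨hx, hxi⟩
          _ ≤ (SNc G j \ {i}).ncard + 1 := Set.ncard_insert_le _ _
      have h2 : (SNc G j \ {i}).ncard ≤ {w | w ∈ kCore G k ∧ G'.Adj j w}.ncard :=
        Set.ncard_le_ncard hsub (Set.toFinite _)
      omega
    by_cases hvi : v = i
    · rw [hvi] at hvC hv ⊢
      by_cases hkc : k ≤ coreValue G j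
      · -- i is in the (k+1)-core
        have hik1 : i ∈ kCore G (k + 1) := (mem_kCore_iff G _ i).2 (by omega)
        have hB : k + 1 ≤ {w | w ∈ kCore G (k+1) ∧ G.Adj i w}.ncard :=
          kSupported_kCore G (k+1) i hik1
        have hsub : {w | w ∈ kCore G (k+1) ∧ G.Adj i w} \ {j} ⊆
            {w | w ∈ kCore G k ∧ G'.Adj i w} := by
          rintro w ⟨⟨hwcore, hadj⟩, hwj⟩
          simp only [Set.mem_singleton_iff] at hwj
          refine ⟨mem_kCore_of_le G hwcore (by omega), (hG'adj i w).2 ⟨hadj, ?_⟩⟩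
          intro hs
          rcases Sym2.eq_iff.1 hs with ⟨_, h2⟩ | ⟨h1, _⟩
          · exact hwj h2
          · exact hne h1
        have h1 : {w | w ∈ kCore G (k+1) ∧ G.Adj i w}.ncard ≤
            ({w | w ∈ kCore G (k+1) ∧ G.Adj i w} \ {j}).ncard + 1 := by
          calc {w | w ∈ kCore G (k+1) ∧ G.Adj i w}.ncard
              ≤ (insert j ({w | w ∈ kCore G (k+1) ∧ G.Adj i w} \ {j})).ncard := by
                refine Set.ncard_le_ncard ?_ (Set.toFinite _)
                intro x hx
                by_cases hxj : x = j
                · simp [hxj]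
                · exact Set.mem_insert_of_mem _ ⟨hx, hxj⟩
            _ ≤ _ + 1 := Set.ncard_insert_le _ _
        have h2 := Set.ncard_le_ncard hsub (Set.toFinite
          {w | w ∈ kCore G k ∧ G'.Adj i w})
        omega
      · -- j is not in the k-core, so nothing lost
        have hsub : {w | w ∈ kCore G k ∧ G.Adj i w} ⊆
            {w | w ∈ kCore G k ∧ G'.Adj i w} := by
          rintro w ⟨hwcore, hadj⟩
          refine ⟨hwcore, (hG'adj i w).2 ⟨hadj, ?_⟩⟩
          intro hs
          rcases Sym2.eq_iff.1 hs with ⟨_, h2⟩ | ⟨h1, _⟩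
          · subst h2
            exact hkc ((mem_kCore_iff G k w).1 hwcore)
          · exact hne h1
        exact le_trans (kSupported_kCore G k i hv)
          (Set.ncard_le_ncard hsub (Set.toFinite _))
    · -- v is neither i nor j
      have hsub : {w | w ∈ kCore G k ∧ G.Adj v w} ⊆
          {w | w ∈ kCore G k ∧ G'.Adj v w} := by
        rintro w ⟨hwcore, hadj⟩
        refine ⟨hwcore, (hG'adj v w).2 ⟨hadj, ?_⟩⟩
        intro hs
        rcases Sym2.eq_iff.1 hs with ⟨h1, _⟩ | ⟨h1, _⟩
        · exact hvi h1
        · exact hvj h1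
      exact le_trans (kSupported_kCore G k v hv)
        (Set.ncard_le_ncard hsub (Set.toFinite _))
  have hle1 : coreValue G u ≤ coreValue G' u := by
    rw [← mem_kCore_iff]
    exact Set.mem_sUnion.2 ⟨kCore G (coreValue G u), key _,
      (mem_kCore_iff G _ u).2 le_rfl⟩
  have hle2 : coreValue G' u ≤ coreValue G u :=
    coreValue_mono (SimpleGraph.deleteEdges_le _) u
  omega
end

section
/- (Core strength upper-bounds node robustness) Let G be a finite simple graph and i a vertex with C(i,G) ≥ 1. For every set T ⊆ SN(i,G) with |T| = CS(i,G), deleting the CS(i,G) edges {i,t} for t ∈ T from G yields a graph G' with C(i,G') < C(i,G). In particular, the minimum number of edges whose removal strictly decreases the core value of i is at most CS(i,G). -/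
section Aux

variable {V : Type*} [Fintype V]

lemma mem_kCore_zero (G : SimpleGraph V) (i : V) : i ∈ kCore G 0 :=
  ⟨Set.univ, fun _ _ => Nat.zero_le _, Set.mem_univ i⟩

lemma coreSet_nonempty (G : SimpleGraph V) (i : V) :
    {k | i ∈ kCore G k}.Nonempty := ⟨0, mem_kCore_zero G i⟩

lemma coreSet_bdd (G : SimpleGraph V) (i : V) :
    BddAbove {k | i ∈ kCore G k} := by
  refine ⟨Fintype.card V, fun k hk => ?_⟩
  obtain ⟨S, hS, hiS⟩ := hk
  calc k ≤ {j | j ∈ S ∧ G.Adj i j}.ncard := hS i hiS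
    _ ≤ (Set.univ : Set V).ncard := Set.ncard_le_ncard (Set.subset_univ _) (Set.toFinite _)
    _ = Fintype.card V := by rw [Set.ncard_univ, Nat.card_eq_fintype_card]

lemma mem_kCore_coreValue (G : SimpleGraph V) (i : V) :
    i ∈ kCore G (coreValue G i) :=
  Nat.sSup_mem (coreSet_nonempty G i) (coreSet_bdd G i)

lemma le_coreValue {G : SimpleGraph V} {i : V} {k : ℕ} (h : i ∈ kCore G k) :
    k ≤ coreValue G i :=
  le_csSup (coreSet_bdd G i) h

lemma kCore_supported (G : SimpleGraph V) (k : ℕ) :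
    kSupported G k (kCore G k) := by
  intro i hi
  obtain ⟨S, hS, hiS⟩ := hi
  calc k ≤ {j | j ∈ S ∧ G.Adj i j}.ncard := hS i hiS
    _ ≤ {j | j ∈ kCore G k ∧ G.Adj i j}.ncard := by
        refine Set.ncard_le_ncard (fun j hj => ?_) (Set.toFinite _)
        exact ⟨⟨S, hS, hj.1⟩, hj.2⟩

lemma kCore_anti (G : SimpleGraph V) {k k' : ℕ} (h : k ≤ k') :
    kCore G k' ⊆ kCore G k := by
  rintro x ⟨S, hS, hxS⟩
  exact ⟨S, fun j hj => le_trans h (hS j hj), hxS⟩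

lemma kCore_mono_graph {G G' : SimpleGraph V} (h : G' ≤ G) (k : ℕ) :
    kCore G' k ⊆ kCore G k := by
  rintro x ⟨S, hS, hxS⟩
  refine ⟨S, fun j hj => le_trans (hS j hj) ?_, hxS⟩
  exact Set.ncard_le_ncard (fun a ha => ⟨ha.1, h ha.2⟩) (Set.toFinite _)

lemma coreValue_le_ncard_SNc (G : SimpleGraph V) (i : V) :
    coreValue G i ≤ (SNc G i).ncard := by
  set c := coreValue G i
  have h1 : c ≤ {j | j ∈ kCore G c ∧ G.Adj i j}.ncard :=
    kCore_supported G c i (mem_kCore_coreValue G i)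
  refine le_trans h1 (Set.ncard_le_ncard (fun j hj => ?_) (Set.toFinite _))
  exact ⟨hj.2, le_coreValue hj.1⟩

end Aux

theorem stmt_14 {V : Type*} [Fintype V] (G : SimpleGraph V) (i : V)
    (hC : 1 ≤ coreValue G i) :
    (∀ T : Set V, T ⊆ SNc G i → T.ncard = CS G i →
        coreValue (G.deleteEdges ((fun t => s(i, t)) '' T)) i < coreValue G i) ∧
      ∃ e : Set (Sym2 V), e ⊆ G.edgeSet ∧ e.ncard ≤ CS G i ∧
        coreValue (G.deleteEdges e) i < coreValue G i := by
  set c := coreValue G i with hc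
  have hSN : c ≤ (SNc G i).ncard := coreValue_le_ncard_SNc G i
  have main : ∀ T : Set V, T ⊆ SNc G i → T.ncard = CS G i →
      coreValue (G.deleteEdges ((fun t => s(i, t)) '' T)) i < c := by
    intro T hTsub hTcard
    set G' := G.deleteEdges ((fun t => s(i, t)) '' T) with hG'
    by_contra hcon
    push_neg at hcon
    have hle : G' ≤ G := SimpleGraph.deleteEdges_le _
    have hiC : i ∈ kCore G' c :=
      kCore_anti G' hcon (mem_kCore_coreValue G' i)
    have hA : c ≤ {j | j ∈ kCore G' c ∧ G'.Adj i j}.ncard :=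
      kCore_supported G' c i hiC
    have hsub : {j | j ∈ kCore G' c ∧ G'.Adj i j} ⊆ SNc G i \ T := by
      rintro j ⟨hj1, hj2⟩
      have hadjG : G.Adj i j := hle hj2
      have hjT : j ∉ T := by
        intro hjT
        rw [hG', SimpleGraph.deleteEdges_adj] at hj2
        exact hj2.2 ⟨j, hjT, rfl⟩
      exact ⟨⟨hadjG, le_coreValue (kCore_mono_graph hle c hj1)⟩, hjT⟩
    have hA2 : c ≤ (SNc G i \ T).ncard :=
      le_trans hA (Set.ncard_le_ncard hsub (Set.toFinite _))
    have hdiff : (SNc G i \ T).ncard = (SNc G i).ncard - T.ncard :=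
      Set.ncard_diff hTsub (Set.toFinite _)
    rw [hdiff, hTcard] at hA2
    unfold CS at hA2
    omega
  refine ⟨main, ?_⟩
  have hCS : CS G i ≤ (SNc G i).ncard := by unfold CS; omega
  obtain ⟨T, hTsub, hTcard⟩ := Set.exists_subset_card_eq hCS
  refine ⟨(fun t => s(i, t)) '' T, ?_, ?_, main T hTsub hTcard⟩
  · rintro e ⟨t, htT, rfl⟩
    exact (hTsub htT).1
  · calc ((fun t => s(i, t)) '' T).ncard ≤ T.ncard :=
        Set.ncard_image_le (Set.toFinite _)
      _ = CS G i := hTcard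
end
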